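/- For a free BV theory, the Dirac pairing τ_D(ψ₁ ⊗ ψ₂) := ∫_M (ψ₁, Λ_D ψ₂) vol_M, with Λ_D := ½(Λ₊ + Λ₋), trivializes the (−1)-shifted Poisson structure: ∂τ_D = τ₍₋₁₎ in the internal hom complex, where τ₍₋₁₎(ψ₁⊗ψ₂) = (−1)^{|ψ₁|} ∫_M (ψ₁, ψ₂) vol_M. -/
import Mathlib


/-!
STATEMENT 10: For a free BV theory, the Dirac pairing
`τ_D(ψ₁ ⊗ ψ₂) := ∫_M (ψ₁, Λ_D ψ₂) vol_M`, with `Λ_D := ½(Λ₊ + Λ₋)`, trivializes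
the (−1)-shifted Poisson structure: `∂τ_D = τ₍₋₁₎` in the internal hom complex,
where `τ₍₋₁₎(ψ₁ ⊗ ψ₂) = (−1)^{|ψ₁|} ∫_M (ψ₁, ψ₂) vol_M`.

Abstraction: `Fc i` is the degree-`i` component of the shifted complex
`𝔉_c(M)[1]` (sections of unshifted degree `i + 1`) with shifted differential
`q i : Fc i → Fc (i+1)`; `F i` is the degree-`i` component of `𝔉(M)` with
differential `QF i : F i → F (i+1)`; `ι i : Fc i → F (i+1)` is the inclusion and
`Λ_D i : Fc i → F i` the Dirac homotopy.  `Kp i j x y` is the integration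
pairing `∫_M (x, y) vol_M` in unshifted degrees `i, j`.  The hypotheses are the
compatibility of the fiber metric with the differential
(`∫(Qφ₁,φ₂)vol + (−1)^{|φ₁|}∫(φ₁,Qφ₂)vol = 0`) and `∂Λ_D = j`
(`Q Λ_D − Λ_D Q_{[1]} = j`).  Following the paper, the internal hom differential
of the degree-0 pairing `τ_D` is
`(∂τ_D)(ψ₁⊗ψ₂) = ∫(Qψ₁, Λ_Dψ₂) vol − (−1)^{|ψ₁|} ∫(ψ₁, Λ_D Q_{[1]}ψ₂) vol`.
-/

/-- Koszul sign `(−1)ⁿ`. -/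
def gsgn (n : ℤ) : ℝ := if Even n then 1 else -1

theorem dirac_pairing_trivializes_shifted_poisson
    (Fc F : ℤ → Type*)
    [∀ i, AddCommGroup (Fc i)] [∀ i, Module ℝ (Fc i)]
    [∀ i, AddCommGroup (F i)] [∀ i, Module ℝ (F i)]
    (ι : ∀ i, Fc i →ₗ[ℝ] F (i + 1))
    (q : ∀ i, Fc i →ₗ[ℝ] Fc (i + 1))
    (QF : ∀ i, F i →ₗ[ℝ] F (i + 1))
    (ΛD : ∀ i, Fc i →ₗ[ℝ] F i)
    (Kp : ∀ i j, F i →ₗ[ℝ] F j →ₗ[ℝ] ℝ)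
    -- compatibility of the (−1)-shifted fiber metric with the differential
    (hcomp : ∀ (i j : ℤ) (x : F i) (y : F j),
      Kp (i + 1) j (QF i x) y + gsgn i * Kp i (j + 1) x (QF j y) = 0)
    -- ∂Λ_D = j : the Dirac homotopy trivializes the inclusion
    (hΛ : ∀ (j : ℤ) (ψ : Fc j),
      QF j (ΛD j ψ) - ΛD (j + 1) (q j ψ) = ι j ψ) :
    -- ∂τ_D = τ₍₋₁₎
    ∀ (i j : ℤ) (ψ₁ : Fc i) (ψ₂ : Fc j),
      Kp (i + 1 + 1) j (QF (i + 1) (ι i ψ₁)) (ΛD j ψ₂)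
        - gsgn i * Kp (i + 1) (j + 1) (ι i ψ₁) (ΛD (j + 1) (q j ψ₂))
      = gsgn i * Kp (i + 1) (j + 1) (ι i ψ₁) (ι j ψ₂) := by
  intro i j ψ₁ ψ₂
  have hs : gsgn (i + 1) = -gsgn i := by
    simp only [gsgn, Int.even_add_one]
    by_cases h : Even i <;> simp [h]
  have h1 := hcomp (i + 1) j (ι i ψ₁) (ΛD j ψ₂)
  rw [hs] at h1
  have h2 : QF j (ΛD j ψ₂) = ι j ψ₂ + ΛD (j + 1) (q j ψ₂) := by
    have h := hΛ j ψ₂; have := eq_add_of_sub_eq h; rw [this]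
  rw [h2, map_add] at h1
  linarith
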